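/- arXiv:1510.02215 — 4 statements merged into one kernel-verified Lean document; each statement's English description precedes it below -/
import Mathlib

section
/- Let G be a finite simple graph with vertex set V. For every vertex v: the sum over all neighbors a of v of n2e(v,a) · n3(v,a) equals F8''(v) + 2·F9(v). -/
open Finset
open scoped Classical

namespace FourProfiles

variable {V : Type*} [Fintype V] [DecidableEq V]

/-- Number of 3-element subsets of `V \ {v}` admitting a labeling `a, b, c` satisfying `P`. -/
noncomputable def cnt3 (v : V) (P : V → V → V → Prop) : ℕ :=
  (((Finset.univ : Finset V).powersetCard 3).filter
    (fun s => v ∉ s ∧ ∃ a ∈ s, ∃ b ∈ s, ∃ c ∈ s, s = {a, b, c} ∧ P a b c)).card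

variable (G : SimpleGraph V)

/-- Induced subgraph on `{v,a,b,c}` has exactly one edge, with `v` an endpoint. -/
noncomputable def F1 (v : V) : ℕ := cnt3 v fun a b c =>
  G.Adj v a ∧ ¬G.Adj v b ∧ ¬G.Adj v c ∧ ¬G.Adj a b ∧ ¬G.Adj a c ∧ ¬G.Adj b c

/-- Induced subgraph on `{v,a,b,c}` is a perfect matching (two disjoint edges). -/
noncomputable def F2 (v : V) : ℕ := cnt3 v fun a b c =>
  G.Adj v a ∧ G.Adj b c ∧ ¬G.Adj v b ∧ ¬G.Adj v c ∧ ¬G.Adj a b ∧ ¬G.Adj a c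

/-- Two-edge path plus isolated vertex, `v` an endpoint of the path. -/
noncomputable def F3 (v : V) : ℕ := cnt3 v fun a b c =>
  G.Adj v a ∧ G.Adj a b ∧ ¬G.Adj v b ∧ ¬G.Adj v c ∧ ¬G.Adj a c ∧ ¬G.Adj b c

/-- Two-edge path plus isolated vertex, `v` the middle vertex of the path. -/
noncomputable def F3' (v : V) : ℕ := cnt3 v fun a b c =>
  G.Adj v a ∧ G.Adj v b ∧ ¬G.Adj a b ∧ ¬G.Adj v c ∧ ¬G.Adj a c ∧ ¬G.Adj b c

/-- Path on four vertices, `v` an endpoint. -/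
noncomputable def F4 (v : V) : ℕ := cnt3 v fun a b c =>
  G.Adj v a ∧ G.Adj a b ∧ G.Adj b c ∧ ¬G.Adj v b ∧ ¬G.Adj v c ∧ ¬G.Adj a c

/-- Path on four vertices, `v` an internal (degree-2) vertex. -/
noncomputable def F4' (v : V) : ℕ := cnt3 v fun a b c =>
  G.Adj v a ∧ G.Adj v b ∧ G.Adj b c ∧ ¬G.Adj a b ∧ ¬G.Adj v c ∧ ¬G.Adj a c

/-- Triangle plus isolated vertex, `v` in the triangle. -/
noncomputable def F5 (v : V) : ℕ := cnt3 v fun a b c =>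
  G.Adj v a ∧ G.Adj v b ∧ G.Adj a b ∧ ¬G.Adj v c ∧ ¬G.Adj a c ∧ ¬G.Adj b c

/-- Star `K_{1,3}`, `v` a leaf. -/
noncomputable def F6 (v : V) : ℕ := cnt3 v fun a b c =>
  G.Adj v a ∧ G.Adj a b ∧ G.Adj a c ∧ ¬G.Adj v b ∧ ¬G.Adj v c ∧ ¬G.Adj b c

/-- Star `K_{1,3}`, `v` the center. -/
noncomputable def F6' (v : V) : ℕ := cnt3 v fun a b c =>
  G.Adj v a ∧ G.Adj v b ∧ G.Adj v c ∧ ¬G.Adj a b ∧ ¬G.Adj a c ∧ ¬G.Adj b c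

/-- 4-cycle. -/
noncomputable def F7 (v : V) : ℕ := cnt3 v fun a b c =>
  G.Adj v a ∧ G.Adj a b ∧ G.Adj b c ∧ G.Adj v c ∧ ¬G.Adj v b ∧ ¬G.Adj a c

/-- Paw (triangle with a pendant edge), `v` the pendant (degree-1) vertex. -/
noncomputable def F8 (v : V) : ℕ := cnt3 v fun a b c =>
  G.Adj v a ∧ G.Adj a b ∧ G.Adj a c ∧ G.Adj b c ∧ ¬G.Adj v b ∧ ¬G.Adj v c

/-- Paw, `v` the degree-3 vertex. -/
noncomputable def F8' (v : V) : ℕ := cnt3 v fun a b c =>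
  G.Adj v a ∧ G.Adj v b ∧ G.Adj a b ∧ G.Adj v c ∧ ¬G.Adj a c ∧ ¬G.Adj b c

/-- Paw, `v` one of the two degree-2 vertices. -/
noncomputable def F8'' (v : V) : ℕ := cnt3 v fun a b c =>
  G.Adj v a ∧ G.Adj v b ∧ G.Adj a b ∧ G.Adj a c ∧ ¬G.Adj v c ∧ ¬G.Adj b c

/-- Diamond (`K4` minus one edge), `v` one of the two degree-2 vertices. -/
noncomputable def F9 (v : V) : ℕ := cnt3 v fun a b c =>
  G.Adj v a ∧ G.Adj v b ∧ G.Adj a b ∧ G.Adj a c ∧ G.Adj b c ∧ ¬G.Adj v c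

/-- Diamond, `v` one of the two degree-3 vertices. -/
noncomputable def F9' (v : V) : ℕ := cnt3 v fun a b c =>
  G.Adj v a ∧ G.Adj v b ∧ G.Adj v c ∧ G.Adj a b ∧ G.Adj a c ∧ ¬G.Adj b c

/-- Complete graph `K4`. -/
noncomputable def F10 (v : V) : ℕ := cnt3 v fun a b c =>
  G.Adj v a ∧ G.Adj v b ∧ G.Adj v c ∧ G.Adj a b ∧ G.Adj a c ∧ G.Adj b c

/-- `|V \ (Γ(v) ∪ Γ(a))|`. -/
noncomputable def n1e (v a : V) : ℕ :=
  (Finset.univ.filter fun x => ¬G.Adj v x ∧ ¬G.Adj a x).card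

/-- `|Γ(v) \ (Γ(a) ∪ {a})|`. -/
noncomputable def n2c (v a : V) : ℕ :=
  (Finset.univ.filter fun x => G.Adj v x ∧ ¬G.Adj a x ∧ x ≠ a).card

/-- `|Γ(a) \ (Γ(v) ∪ {v})|`. -/
noncomputable def n2e (v a : V) : ℕ :=
  (Finset.univ.filter fun x => G.Adj a x ∧ ¬G.Adj v x ∧ x ≠ v).card

/-- `|Γ(v) ∩ Γ(a)|`. -/
noncomputable def n3 (v a : V) : ℕ :=
  (Finset.univ.filter fun x => G.Adj v x ∧ G.Adj a x).card

/-- Number of edges of `G` with neither endpoint in `Γ(v) ∪ {v}`. -/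
noncomputable def n1d (v : V) : ℕ :=
  (((Finset.univ : Finset V).powersetCard 2).filter
    (fun s => ∃ a ∈ s, ∃ b ∈ s, s = {a, b} ∧ G.Adj a b ∧
      ¬G.Adj v a ∧ ¬G.Adj v b ∧ a ≠ v ∧ b ≠ v)).card

/-- Number of triangles of `G` containing `a`. -/
noncomputable def tri (a : V) : ℕ :=
  (((Finset.univ : Finset V).powersetCard 2).filter
    (fun s => ∃ x ∈ s, ∃ y ∈ s, s = {x, y} ∧ G.Adj a x ∧ G.Adj a y ∧ G.Adj x y)).card

/-- Number of 2-element subsets `{x,y}` of `V \ {a}` inducing a two-edge path with `a`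
an endpoint. -/
noncomputable def twoPathEnd (a : V) : ℕ :=
  (((Finset.univ : Finset V).powersetCard 2).filter
    (fun s => a ∉ s ∧ ∃ x ∈ s, ∃ y ∈ s, s = {x, y} ∧ G.Adj a x ∧ G.Adj x y ∧ ¬G.Adj a y)).card

/-- Number of 2-element subsets `{b,c} ⊆ Γ(a)` with `b` adjacent to `c`, `b ∈ Γ(v)`,
`c ∈ Γ(v)`. -/
noncomputable def triIn (v a : V) : ℕ :=
  (((Finset.univ : Finset V).powersetCard 2).filter
    (fun s => ∃ b ∈ s, ∃ c ∈ s, s = {b, c} ∧ G.Adj a b ∧ G.Adj a c ∧ G.Adj b c ∧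
      G.Adj v b ∧ G.Adj v c)).card

/-- Number of 2-element subsets `{b,c} ⊆ Γ(a)` with `b` adjacent to `c`, `b ∉ Γ(v)`,
`c ∉ Γ(v)`. -/
noncomputable def triOut (v a : V) : ℕ :=
  (((Finset.univ : Finset V).powersetCard 2).filter
    (fun s => ∃ b ∈ s, ∃ c ∈ s, s = {b, c} ∧ G.Adj a b ∧ G.Adj a c ∧ G.Adj b c ∧
      ¬G.Adj v b ∧ ¬G.Adj v c)).card

/-!
Both sides count the ordered triples `(a, b, c)` of vertices other than `v` with `a, b ∈ Γ(v)`,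
`b ∈ Γ(a)` and `c ∈ Γ(a) \ (Γ(v) ∪ {v})`: for fixed `a` there are `n3(v,a) · n2e(v,a)` choices
of `(b, c)`. If `b` and `c` are not adjacent, `{v, a, b, c}` induces a paw in which `v` has
degree 2 and the labelling is forced. If they are adjacent, it induces a diamond whose
degree-2 vertices are `v` and `c`; then `a` and `b` may be swapped, so every diamond is counted
twice.
-/

theorem card_eq_two_mul_card_image {α β : Type*} [DecidableEq α] [DecidableEq β]
    {s : Finset α} {f : α → β} {σ : α → α} (hσ_mem : ∀ x ∈ s, σ x ∈ s)
    (hσ_ne : ∀ x ∈ s, σ x ≠ x) (hfσ : ∀ x ∈ s, f (σ x) = f x)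
    (hfiber : ∀ x ∈ s, ∀ y ∈ s, f y = f x → y = x ∨ y = σ x) :
    #s = 2 * #(s.image f) := by
  rw [card_eq_sum_card_image f s, mul_comm]
  refine sum_const_nat fun b hb => ?_
  obtain ⟨x, hx, rfl⟩ := mem_image.mp hb
  have : {y ∈ s | f y = f x} = {x, σ x} := by
    ext y
    simp only [mem_filter, mem_insert, mem_singleton]
    constructor
    · exact fun ⟨hy, hfy⟩ => hfiber x hx y hy hfy
    · rintro (rfl | rfl)
      exacts [⟨hx, rfl⟩, ⟨hσ_mem _ hx, hfσ _ hx⟩]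
  rw [this, card_pair (hσ_ne x hx).symm]

theorem eq_perm_of_triple_eq {α : Type*} [DecidableEq α] {a b c a' b' c' : α}
    (h' : a' ≠ b' ∧ a' ≠ c' ∧ b' ≠ c') (h : ({a, b, c} : Finset α) = {a', b', c'}) :
    (a', b', c') = (a, b, c) ∨ (a', b', c') = (a, c, b) ∨ (a', b', c') = (b, a, c) ∨
      (a', b', c') = (b, c, a) ∨ (a', b', c') = (c, a, b) ∨ (a', b', c') = (c, b, a) := by
  have ha : a' ∈ ({a, b, c} : Finset α) := by simp [h]
  have hb : b' ∈ ({a, b, c} : Finset α) := by simp [h]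
  have hc : c' ∈ ({a, b, c} : Finset α) := by simp [h]
  simp only [mem_insert, mem_singleton] at ha hb hc
  rcases ha with rfl | rfl | rfl <;> rcases hb with rfl | rfl | rfl <;>
    rcases hc with rfl | rfl | rfl <;> simp_all

def tripleFinset (p : V × V × V) : Finset V := {p.1, p.2.1, p.2.2}

noncomputable def labeledTriples (v : V) (P : V → V → V → Prop) : Finset (V × V × V) :=
  univ.filter fun p => p.1 ≠ p.2.1 ∧ p.1 ≠ p.2.2 ∧ p.2.1 ≠ p.2.2 ∧
    v ≠ p.1 ∧ v ≠ p.2.1 ∧ v ≠ p.2.2 ∧ P p.1 p.2.1 p.2.2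

theorem mem_labeledTriples {v a b c : V} {P : V → V → V → Prop} :
    (a, b, c) ∈ labeledTriples v P ↔
      a ≠ b ∧ a ≠ c ∧ b ≠ c ∧ v ≠ a ∧ v ≠ b ∧ v ≠ c ∧ P a b c := by
  simp [labeledTriples]

theorem cnt3_eq_card_image (v : V) (P : V → V → V → Prop) :
    cnt3 v P = #((labeledTriples v P).image tripleFinset) := by
  unfold cnt3
  congr 1
  ext s
  simp only [mem_filter, mem_powersetCard, subset_univ, true_and, mem_image, Prod.exists,
    mem_labeledTriples, tripleFinset]
  constructor
  · rintro ⟨hcard, hv, a, -, b, -, c, -, rfl, hP⟩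
    obtain ⟨hab, hac, hbc⟩ := card_triple_eq_three_iff.mp hcard
    refine ⟨a, b, c, ⟨hab, hac, hbc, ?_, ?_, ?_, hP⟩, rfl⟩ <;> rintro rfl <;> simp at hv
  · rintro ⟨a, b, c, ⟨hab, hac, hbc, hva, hvb, hvc, hP⟩, rfl⟩
    exact ⟨card_triple_eq_three_iff.mpr ⟨hab, hac, hbc⟩, by simp [hva, hvb, hvc],
      a, by simp, b, by simp, c, by simp, rfl, hP⟩

theorem cnt3_eq_card_labeledTriples {v : V} {P : V → V → V → Prop}
    (hrigid : ∀ a b c, P a b c → ¬P a c b ∧ ¬P b a c ∧ ¬P b c a ∧ ¬P c a b ∧ ¬P c b a) :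
    cnt3 v P = #(labeledTriples v P) := by
  rw [cnt3_eq_card_image]
  refine card_image_of_injOn ?_
  rintro ⟨a, b, c⟩ hp ⟨a', b', c'⟩ hq heq
  obtain ⟨-, -, -, -, -, -, hP⟩ := mem_labeledTriples.mp hp
  obtain ⟨hab', hac', hbc', -, -, -, hP'⟩ := mem_labeledTriples.mp hq
  have := hrigid a b c hP
  rcases eq_perm_of_triple_eq ⟨hab', hac', hbc'⟩ heq with h | h | h | h | h | h <;>
    simp only [Prod.mk.injEq] at h <;> obtain ⟨rfl, rfl, rfl⟩ := h <;> tauto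

theorem two_mul_cnt3_eq_card_labeledTriples {v : V} {P : V → V → V → Prop}
    (hswap : ∀ a b c, P a b c → P b a c)
    (hlast : ∀ a b c, P a b c → ¬P a c b ∧ ¬P b c a ∧ ¬P c a b ∧ ¬P c b a) :
    2 * cnt3 v P = #(labeledTriples v P) := by
  rw [cnt3_eq_card_image]
  symm
  refine card_eq_two_mul_card_image (σ := fun p => (p.2.1, p.1, p.2.2)) ?_ ?_ ?_ ?_
  · rintro ⟨a, b, c⟩ hp
    obtain ⟨hab, hac, hbc, hva, hvb, hvc, hP⟩ := mem_labeledTriples.mp hp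
    exact mem_labeledTriples.mpr ⟨hab.symm, hbc, hac, hvb, hva, hvc, hswap a b c hP⟩
  · rintro ⟨a, b, c⟩ hp h
    exact (mem_labeledTriples.mp hp).1 (congrArg Prod.fst h).symm
  · rintro ⟨a, b, c⟩ -
    exact insert_comm b a {c}
  · rintro ⟨a, b, c⟩ hp ⟨a', b', c'⟩ hq heq
    obtain ⟨-, -, -, -, -, -, hP⟩ := mem_labeledTriples.mp hp
    obtain ⟨hab', hac', hbc', -, -, -, hP'⟩ := mem_labeledTriples.mp hq
    have := hlast a b c hP
    rcases eq_perm_of_triple_eq ⟨hab', hac', hbc'⟩ heq.symm with h | h | h | h | h | h <;>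
      simp only [Prod.mk.injEq] at h <;> obtain ⟨rfl, rfl, rfl⟩ := h <;> tauto

theorem card_labeledTriples_eq_add {v : V} {P Q R : V → V → V → Prop}
    (hP : ∀ a b c, P a b c ↔ Q a b c ∨ R a b c) (hQR : ∀ a b c, Q a b c → ¬R a b c) :
    #(labeledTriples v P) = #(labeledTriples v Q) + #(labeledTriples v R) := by
  rw [← card_union_of_disjoint]
  · congr 1
    ext ⟨a, b, c⟩
    simp only [mem_union, mem_labeledTriples, hP]
    tauto
  · refine disjoint_left.mpr fun ⟨a, b, c⟩ hQ hR => hQR a b c ?_ ?_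
    exacts [(mem_labeledTriples.mp hQ).2.2.2.2.2.2, (mem_labeledTriples.mp hR).2.2.2.2.2.2]

theorem sum_n2e_mul_n3_eq_card_labeledTriples [DecidableRel G.Adj] (v : V) :
    ∑ a ∈ G.neighborFinset v, n2e G v a * n3 G v a = #(labeledTriples v fun a b c =>
      G.Adj v a ∧ G.Adj v b ∧ G.Adj a b ∧ G.Adj a c ∧ ¬G.Adj v c) := by
  symm
  rw [card_eq_sum_card_fiberwise (f := Prod.fst) (t := G.neighborFinset v)
    fun p hp => (G.mem_neighborFinset _ _).mpr (mem_labeledTriples.mp hp).2.2.2.2.2.2.1]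
  refine sum_congr rfl fun a ha => ?_
  rw [SimpleGraph.mem_neighborFinset] at ha
  have hfiber : {p ∈ labeledTriples v (fun a b c => G.Adj v a ∧ G.Adj v b ∧ G.Adj a b ∧
      G.Adj a c ∧ ¬G.Adj v c) | p.1 = a} = {a} ×ˢ (({b | G.Adj v b ∧ G.Adj a b} : Finset V) ×ˢ
      ({c | G.Adj a c ∧ ¬G.Adj v c ∧ c ≠ v} : Finset V)) := by
    ext ⟨a', b, c⟩
    simp only [mem_filter, mem_product, mem_singleton, mem_univ, true_and, mem_labeledTriples]
    constructor
    · rintro ⟨⟨-, -, -, -, -, hvc, -, hvb, hab, hac, hnvc⟩, rfl⟩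
      exact ⟨rfl, ⟨hvb, hab⟩, hac, hnvc, Ne.symm hvc⟩
    · rintro ⟨rfl, ⟨hvb, hab⟩, hac, hnvc, hcv⟩
      exact ⟨⟨G.ne_of_adj hab, fun h => hnvc (h ▸ ha), fun h => hnvc (h ▸ hvb), G.ne_of_adj ha,
        G.ne_of_adj hvb, Ne.symm hcv, ha, hvb, hab, hac, hnvc⟩, rfl⟩
  rw [hfiber, card_product, card_product, card_singleton, one_mul, mul_comm, n2e, n3]
  -- `n2e` and `n3` filter with classical decidability, the sets above with `DecidableRel G.Adj`
  congr

theorem F8''_eq_card_labeledTriples (v : V) : F8'' G v = #(labeledTriples v fun a b c =>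
    G.Adj v a ∧ G.Adj v b ∧ G.Adj a b ∧ G.Adj a c ∧ ¬G.Adj v c ∧ ¬G.Adj b c) :=
  cnt3_eq_card_labeledTriples fun a b c h => by grind [SimpleGraph.Adj.symm]

theorem two_mul_F9_eq_card_labeledTriples (v : V) : 2 * F9 G v = #(labeledTriples v fun a b c =>
    G.Adj v a ∧ G.Adj v b ∧ G.Adj a b ∧ G.Adj a c ∧ G.Adj b c ∧ ¬G.Adj v c) :=
  two_mul_cnt3_eq_card_labeledTriples (fun a b c h => by grind [SimpleGraph.Adj.symm])
    fun a b c h => by grind [SimpleGraph.Adj.symm]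

theorem statement13 [DecidableRel G.Adj] (v : V) :
    ∑ a ∈ G.neighborFinset v, n2e G v a * n3 G v a = F8'' G v + 2 * F9 G v := by
  rw [sum_n2e_mul_n3_eq_card_labeledTriples, F8''_eq_card_labeledTriples,
    two_mul_F9_eq_card_labeledTriples]
  exact card_labeledTriples_eq_add (fun _ _ _ => by tauto) fun _ _ _ => by tauto

end FourProfiles
end

section
/- Let G be a finite simple graph with vertex set V. For every vertex v: the sum over all neighbors a of v of ( n3(a) − n3(v,a) ) equals F8(v) + 2·F9(v) + 3·F10(v). -/
open Finset
open scoped Classical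

namespace FourProfiles

variable {V : Type*} [Fintype V] [DecidableEq V]

variable (G : SimpleGraph V)

/-!
Both sides count the triangles of `G` avoiding `v`, each weighted by the number of its vertices
adjacent to `v`. On the left, of the triangles through a neighbour `a` of `v`, exactly `n3(v,a)`
contain `v`; double counting the pairs (`a`, triangle through `a` avoiding `v`) gives the weighted
sum. On the right, a triangle avoiding `v` with one, two or three vertices adjacent to `v` spans,
together with `v`, a paw with `v` pendant, a diamond with `v` of degree 2, or a `K4`.
-/

lemma card_filter_triple {α : Type*} [DecidableEq α] {p : α → Prop} [DecidablePred p]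
    {x y z : α} (hxy : x ≠ y) (hxz : x ≠ z) (hyz : y ≠ z) :
    #{a ∈ ({x, y, z} : Finset α) | p a} =
      (if p x then 1 else 0) + (if p y then 1 else 0) + (if p z then 1 else 0) := by
  rw [card_filter, sum_insert (by simp [hxy, hxz]), sum_pair hyz, add_assoc]

lemma exists_eq_triple_of_perm {α : Type*} [DecidableEq α] {P : α → α → α → Prop}
    {x y z : α} (h : P x y z ∨ P x z y ∨ P y x z ∨ P y z x ∨ P z x y ∨ P z y x) :
    ∃ a ∈ ({x, y, z} : Finset α), ∃ b ∈ ({x, y, z} : Finset α),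
      ∃ c ∈ ({x, y, z} : Finset α), {x, y, z} = ({a, b, c} : Finset α) ∧ P a b c := by
  rcases h with h | h | h | h | h | h <;>
    exact ⟨_, by simp, _, by simp, _, by simp,
      by ext; simp only [mem_insert, mem_singleton] <;> tauto, h⟩

lemma sum_eq_card_filter_of_le_three {ι : Type*} (T : Finset ι) (f : ι → ℕ)
    (hf : ∀ i ∈ T, f i ≤ 3) :
    ∑ i ∈ T, f i =
      #{i ∈ T | f i = 1} + 2 * #{i ∈ T | f i = 2} + 3 * #{i ∈ T | f i = 3} := by
  rw [← sum_fiberwise_of_maps_to (t := range 4) (g := f)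
    fun i hi => mem_range.2 (Nat.lt_succ_of_le (hf i hi))]
  have hfiber (k : ℕ) : ∑ i ∈ T with f i = k, f i = k * #{i ∈ T | f i = k} := by
    rw [sum_congr rfl fun i hi => (mem_filter.1 hi).2, sum_const, smul_eq_mul, mul_comm]
  simp only [hfiber, sum_range_succ, sum_range_zero]
  ring

lemma tri_eq_card_cliqueFinset (a : V) : tri G a = #{s ∈ G.cliqueFinset 3 | a ∈ s} := by
  refine card_bij' (fun s _ => insert a s) (fun s _ => s.erase a) ?_ ?_ ?_ ?_
  · intro s hs
    obtain ⟨x, -, y, -, rfl, hax, hay, hxy⟩ := (mem_filter.1 hs).2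
    exact mem_filter.2 ⟨SimpleGraph.mem_cliqueFinset_iff.2
      (G.is3Clique_triple_iff.2 ⟨hax, hay, hxy⟩), mem_insert_self _ _⟩
  · intro s hs
    obtain ⟨hs, ha⟩ := mem_filter.1 hs
    rw [SimpleGraph.mem_cliqueFinset_iff] at hs
    have hcard : #(s.erase a) = 2 := by rw [card_erase_of_mem ha, hs.card_eq]
    obtain ⟨x, y, hxy, hxy_eq⟩ := card_eq_two.1 hcard
    have hx : x ∈ s.erase a := by simp [hxy_eq]
    have hy : y ∈ s.erase a := by simp [hxy_eq]
    exact mem_filter.2 ⟨mem_powersetCard.2 ⟨subset_univ _, hcard⟩, x, hx, y, hy, hxy_eq,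
      hs.isClique ha (mem_of_mem_erase hx) (ne_of_mem_erase hx).symm,
      hs.isClique ha (mem_of_mem_erase hy) (ne_of_mem_erase hy).symm,
      hs.isClique (mem_of_mem_erase hx) (mem_of_mem_erase hy) hxy⟩
  · intro s hs
    obtain ⟨x, -, y, -, rfl, hax, hay, -⟩ := (mem_filter.1 hs).2
    exact erase_insert (by simp [hax.ne, hay.ne])
  · intro s hs
    exact insert_erase (mem_filter.1 hs).2

lemma n3_eq_card_cliqueFinset {v a : V} (hva : G.Adj v a) :
    n3 G v a = #{s ∈ G.cliqueFinset 3 | a ∈ s ∧ v ∈ s} := by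
  refine card_bij (fun x _ => {v, a, x}) ?_ ?_ ?_
  · intro x hx
    obtain ⟨hvx, hax⟩ := (mem_filter.1 hx).2
    exact mem_filter.2 ⟨SimpleGraph.mem_cliqueFinset_iff.2
      (G.is3Clique_triple_iff.2 ⟨hva, hvx, hax⟩), by simp, by simp⟩
  · intro x hx y hy hxy
    obtain ⟨hvx, hax⟩ := (mem_filter.1 hx).2
    have : x ∈ ({v, a, y} : Finset V) := hxy ▸ by simp
    simpa [hvx.ne', hax.ne'] using this
  · intro s hs
    obtain ⟨hs, ha, hv⟩ := mem_filter.1 hs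
    rw [SimpleGraph.mem_cliqueFinset_iff] at hs
    have hcard : #((s.erase v).erase a) = 1 := by
      rw [card_erase_of_mem (mem_erase.2 ⟨hva.ne', ha⟩), card_erase_of_mem hv, hs.card_eq]
    obtain ⟨x, hx⟩ := card_eq_one.1 hcard
    obtain ⟨hxa, hxv, hxs⟩ : x ≠ a ∧ x ≠ v ∧ x ∈ s := by
      simpa only [← hx, mem_erase] using mem_singleton_self x
    refine ⟨x, mem_filter.2 ⟨mem_univ _, hs.isClique hv hxs hxv.symm,
      hs.isClique ha hxs hxa.symm⟩, ?_⟩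
    rw [← hx, insert_erase (mem_erase.2 ⟨hva.ne', ha⟩), insert_erase hv]

lemma tri_sub_n3_eq_card_cliqueFinset {v a : V} (hva : G.Adj v a) :
    (tri G a : ℤ) - n3 G v a = #{s ∈ G.cliqueFinset 3 | a ∈ s ∧ v ∉ s} := by
  have hsplit :=
    card_filter_add_card_filter_not (s := {s ∈ G.cliqueFinset 3 | a ∈ s}) (v ∈ ·)
  simp only [filter_filter] at hsplit
  rw [tri_eq_card_cliqueFinset, n3_eq_card_cliqueFinset G hva, ← hsplit]
  push_cast
  ring

lemma sum_card_cliqueFinset_mem_eq_sum_card_adj (v : V) [Fintype (G.neighborSet v)] :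
    ∑ a ∈ G.neighborFinset v, #{s ∈ G.cliqueFinset 3 | a ∈ s ∧ v ∉ s} =
      ∑ s ∈ G.cliqueFinset 3 with v ∉ s, #{a ∈ s | G.Adj v a} := by
  have := sum_card_bipartiteAbove_eq_sum_card_bipartiteBelow (s := G.neighborFinset v)
    (t := {s ∈ G.cliqueFinset 3 | v ∉ s}) (r := fun a s => a ∈ s)
  convert this using 3 with a - s -
  · rw [bipartiteAbove, filter_filter]
    simp only [and_comm]
  · ext a
    simp [bipartiteBelow, and_comm]

lemma cnt3_eq_card_cliqueFinset (v : V) (P : V → V → V → Prop) (k : ℕ)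
    (hfwd : ∀ a b c, P a b c → G.Adj a b ∧ G.Adj a c ∧ G.Adj b c ∧
      (if G.Adj v a then 1 else 0) + (if G.Adj v b then 1 else 0) +
        (if G.Adj v c then 1 else 0) = k)
    (hback : ∀ x y z, G.Adj x y → G.Adj x z → G.Adj y z →
      (if G.Adj v x then 1 else 0) + (if G.Adj v y then 1 else 0) +
        (if G.Adj v z then 1 else 0) = k →
      P x y z ∨ P x z y ∨ P y x z ∨ P y z x ∨ P z x y ∨ P z y x) :
    cnt3 v P = #{s ∈ {s ∈ G.cliqueFinset 3 | v ∉ s} | #{a ∈ s | G.Adj v a} = k} := by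
  unfold cnt3
  congr 1
  ext s
  simp only [mem_filter, mem_powersetCard, SimpleGraph.mem_cliqueFinset_iff, subset_univ,
    true_and]
  constructor
  · rintro ⟨-, hv, a, -, b, -, c, -, rfl, hP⟩
    obtain ⟨hab, hac, hbc, hk⟩ := hfwd a b c hP
    exact ⟨⟨G.is3Clique_triple_iff.2 ⟨hab, hac, hbc⟩, hv⟩,
      by rw [card_filter_triple hab.ne hac.ne hbc.ne, hk]⟩
  · rintro ⟨⟨hs, hv⟩, hk⟩
    obtain ⟨x, y, z, hxy, hxz, hyz, rfl⟩ := G.is3Clique_iff.1 hs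
    rw [card_filter_triple hxy.ne hxz.ne hyz.ne] at hk
    exact ⟨hs.card_eq, hv, exists_eq_triple_of_perm (hback x y z hxy hxz hyz hk)⟩

lemma F8_eq_card_cliqueFinset (v : V) :
    F8 G v = #{s ∈ {s ∈ G.cliqueFinset 3 | v ∉ s} | #{a ∈ s | G.Adj v a} = 1} := by
  refine cnt3_eq_card_cliqueFinset G v _ 1
    (fun a b c ⟨hva, hab, hac, hbc, hvb, hvc⟩ => ⟨hab, hac, hbc, by simp [hva, hvb, hvc]⟩)
    fun x y z hxy hxz hyz hk => ?_
  by_cases hx : G.Adj v x <;> by_cases hy : G.Adj v y <;> by_cases hz : G.Adj v z <;>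
    simp_all [hxy.symm, hxz.symm, hyz.symm]

lemma F9_eq_card_cliqueFinset (v : V) :
    F9 G v = #{s ∈ {s ∈ G.cliqueFinset 3 | v ∉ s} | #{a ∈ s | G.Adj v a} = 2} := by
  refine cnt3_eq_card_cliqueFinset G v _ 2
    (fun a b c ⟨hva, hvb, hab, hac, hbc, hvc⟩ => ⟨hab, hac, hbc, by simp [hva, hvb, hvc]⟩)
    fun x y z hxy hxz hyz hk => ?_
  by_cases hx : G.Adj v x <;> by_cases hy : G.Adj v y <;> by_cases hz : G.Adj v z <;>
    simp_all [hxy.symm, hxz.symm, hyz.symm]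

lemma F10_eq_card_cliqueFinset (v : V) :
    F10 G v = #{s ∈ {s ∈ G.cliqueFinset 3 | v ∉ s} | #{a ∈ s | G.Adj v a} = 3} := by
  refine cnt3_eq_card_cliqueFinset G v _ 3
    (fun a b c ⟨hva, hvb, hvc, hab, hac, hbc⟩ => ⟨hab, hac, hbc, by simp [hva, hvb, hvc]⟩)
    fun x y z hxy hxz hyz hk => ?_
  by_cases hx : G.Adj v x <;> by_cases hy : G.Adj v y <;> by_cases hz : G.Adj v z <;>
    simp_all [hxy.symm, hxz.symm, hyz.symm]

lemma sum_card_adj_eq_F8_add_F9_add_F10 (v : V) :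
    ∑ s ∈ G.cliqueFinset 3 with v ∉ s, #{a ∈ s | G.Adj v a} =
      F8 G v + 2 * F9 G v + 3 * F10 G v := by
  rw [F8_eq_card_cliqueFinset, F9_eq_card_cliqueFinset, F10_eq_card_cliqueFinset]
  refine sum_eq_card_filter_of_le_three _ _ fun s hs => (card_filter_le _ _).trans ?_
  exact (SimpleGraph.mem_cliqueFinset_iff.1 (mem_filter.1 hs).1).card_eq.le

theorem statement14 [DecidableRel G.Adj] (v : V) :
    ∑ a ∈ G.neighborFinset v, ((tri G a : ℤ) - (n3 G v a : ℤ)) =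
      (F8 G v : ℤ) + 2 * (F9 G v : ℤ) + 3 * (F10 G v : ℤ) := by
  rw [sum_congr rfl fun a ha =>
      tri_sub_n3_eq_card_cliqueFinset G ((G.mem_neighborFinset v a).1 ha)]
  exact_mod_cast (sum_card_cliqueFinset_mem_eq_sum_card_adj G v).trans
    (sum_card_adj_eq_F8_add_F9_add_F10 G v)

end FourProfiles
end

section
/- Let G be a finite simple graph with vertex set V. For every vertex v: the sum over all neighbors a of v of ( n2e(a) − n2c(v,a) ) equals F4(v) + 2·F7(v) + F8''(v) + 2·F9'(v). -/
open Finset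
open scoped Classical

namespace FourProfiles

variable {V : Type*} [Fintype V] [DecidableEq V]

variable (G : SimpleGraph V)

/-!
Count ordered two-edge paths `a, x, y` with `a ≁ y` instead of the unordered pairs `{x, y}`:
for `a ~ v`, those with `x = v` are exactly the `n2c v a` vertices of `Γ(v) \ (Γ(a) ∪ {a})`, so
the left-hand side counts the paths `v, a, x, y` on four distinct vertices with `a ≁ y`.
Sorting these by the adjacency of `v` to `x` and to `y` gives an induced `P₄`, `C₄`, paw or
diamond on `{v, a, x, y}`. A labelled copy of `P₄` or of the paw is determined by its vertex
set, while a `C₄` or a diamond arises from exactly two paths, reverses of each other.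
-/

lemma nodup_cons_of_card_eq_three {α : Type*} [DecidableEq α] {v a b c : α}
    (h3 : #({a, b, c} : Finset α) = 3) (hv : v ∉ ({a, b, c} : Finset α)) :
    [v, a, b, c].Nodup := by
  rw [List.nodup_cons]
  refine ⟨by simpa using hv, ?_⟩
  rw [← Multiset.coe_nodup, ← Multiset.toFinset_card_eq_card_iff_nodup]
  simpa using h3

lemma mem_of_triple_eq {α : Type*} [DecidableEq α] {a b c a' b' c' : α}
    (h : ({a', b', c'} : Finset α) = {a, b, c}) :
    a' ∈ [a, b, c] ∧ b' ∈ [a, b, c] ∧ c' ∈ [a, b, c] := by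
  have hmem : ∀ x ∈ ({a', b', c'} : Finset α), x ∈ [a, b, c] := by
    intro x hx
    rw [h] at hx
    simpa using hx
  exact ⟨hmem a' (by simp), hmem b' (by simp), hmem c' (by simp)⟩

lemma sum_card_filter_eq_card_filter_prod {α β : Type*} [Fintype α] [Fintype β] [DecidableEq α]
    (s : Finset α) (Q : α → β → Prop) [∀ a b, Decidable (Q a b)] :
    ∑ a ∈ s, #{b | Q a b} = #{p : α × β | p.1 ∈ s ∧ Q p.1 p.2} := by
  rw [card_eq_sum_card_fiberwise (f := Prod.fst) (t := s) fun p hp => by simp at hp; exact hp.1]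
  refine sum_congr rfl fun a _ => card_nbij' (a, ·) Prod.snd ?_ ?_ ?_ ?_ <;> intro x hx <;> grind

lemma card_eq_sum_card_filter_of_two_cases {α : Type*} (s : Finset α) (p q : α → Prop)
    [DecidablePred p] [DecidablePred q] :
    #s = #{x ∈ s | ¬p x ∧ ¬q x} + #{x ∈ s | ¬p x ∧ q x} + #{x ∈ s | p x ∧ ¬q x} +
      #{x ∈ s | p x ∧ q x} := by
  rw [← card_filter_add_card_filter_not (s := s) p,
    ← card_filter_add_card_filter_not (s := s.filter p) q,
    ← card_filter_add_card_filter_not (s := s.filter fun x => ¬p x) q]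
  simp only [filter_filter]
  ring

lemma card_nodup_filter_eq_mul_cnt3 (v : V) (P : V → V → V → Prop)
    [∀ a b c, Decidable (P a b c)] (k : ℕ)
    (hfiber : ∀ a b c, [v, a, b, c].Nodup → P a b c →
      #{t : V × V × V | ([v, t.1, t.2.1, t.2.2].Nodup ∧ P t.1 t.2.1 t.2.2) ∧
        ({t.1, t.2.1, t.2.2} : Finset V) = {a, b, c}} = k) :
    #{t : V × V × V | [v, t.1, t.2.1, t.2.2].Nodup ∧ P t.1 t.2.1 t.2.2} = k * cnt3 v P := by
  rw [cnt3, mul_comm]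
  refine (card_eq_sum_card_fiberwise (f := fun t => {t.1, t.2.1, t.2.2}) ?_).trans
    (sum_const_nat fun s hs => ?_)
  · rintro ⟨a, b, c⟩ ht
    simp only [coe_filter, Set.mem_ofPred_eq, mem_univ, true_and, List.nodup_cons, List.mem_cons,
      List.not_mem_nil, or_false, not_or, List.nodup_nil, not_false_eq_true, and_true] at ht
    obtain ⟨⟨⟨hva, hvb, hvc⟩, ⟨hab, hac⟩, hbc⟩, hP⟩ := ht
    simp only [coe_filter, Set.mem_ofPred_eq, mem_powersetCard, subset_univ, true_and]
    refine ⟨?_, by simp [hva, hvb, hvc], a, by simp, b, by simp, c, by simp, rfl, hP⟩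
    rw [card_insert_of_notMem (by simp [hab, hac]), card_pair hbc]
  · obtain ⟨hs3, hv, a, -, b, -, c, -, rfl, hP⟩ := by simpa [mem_powersetCard] using hs
    rw [filter_filter]
    exact hfiber a b c (nodup_cons_of_card_eq_three hs3 hv) hP

lemma card_nodup_filter_eq_cnt3 (v : V) (P : V → V → V → Prop)
    [∀ a b c, Decidable (P a b c)]
    (hrigid : ∀ a b c a' b' c', [v, a, b, c].Nodup → [v, a', b', c'].Nodup → P a b c →
      P a' b' c' → a' ∈ [a, b, c] → b' ∈ [a, b, c] → c' ∈ [a, b, c] →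
      (a', b', c') = (a, b, c)) :
    #{t : V × V × V | [v, t.1, t.2.1, t.2.2].Nodup ∧ P t.1 t.2.1 t.2.2} = cnt3 v P := by
  rw [← one_mul (cnt3 v P)]
  refine card_nodup_filter_eq_mul_cnt3 v P 1 fun a b c hn hP => card_eq_one.mpr ⟨(a, b, c), ?_⟩
  ext ⟨a', b', c'⟩
  simp only [mem_filter, mem_univ, true_and, mem_singleton]
  constructor
  · rintro ⟨⟨hn', hP'⟩, hs⟩
    obtain ⟨ha, hb, hc⟩ := mem_of_triple_eq hs
    exact hrigid a b c a' b' c' hn hn' hP hP' ha hb hc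
  · intro h
    obtain ⟨rfl, rfl, rfl⟩ := Prod.ext_iff.mp h
    exact ⟨⟨hn, hP⟩, rfl⟩

lemma card_nodup_filter_eq_two_mul_cnt3 (v : V) (P : V → V → V → Prop)
    [∀ a b c, Decidable (P a b c)] (hrev : ∀ a b c, P a b c → P c b a)
    (hrigid : ∀ a b c a' b' c', [v, a, b, c].Nodup → [v, a', b', c'].Nodup → P a b c →
      P a' b' c' → a' ∈ [a, b, c] → b' ∈ [a, b, c] → c' ∈ [a, b, c] →
      (a', b', c') = (a, b, c) ∨ (a', b', c') = (c, b, a)) :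
    #{t : V × V × V | [v, t.1, t.2.1, t.2.2].Nodup ∧ P t.1 t.2.1 t.2.2} = 2 * cnt3 v P := by
  refine card_nodup_filter_eq_mul_cnt3 v P 2 fun a b c hn hP => card_eq_two.mpr
    ⟨(a, b, c), (c, b, a), by grind, ?_⟩
  ext ⟨a', b', c'⟩
  simp only [mem_filter, mem_univ, true_and, mem_insert, mem_singleton]
  constructor
  · rintro ⟨⟨hn', hP'⟩, hs⟩
    obtain ⟨ha, hb, hc⟩ := mem_of_triple_eq hs
    exact hrigid a b c a' b' c' hn hn' hP hP' ha hb hc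
  · rintro (h | h) <;> obtain ⟨rfl, rfl, rfl⟩ := Prod.ext_iff.mp h
    · exact ⟨⟨hn, hP⟩, rfl⟩
    · refine ⟨⟨by grind, hrev _ _ _ hP⟩, ?_⟩
      ext
      simp only [mem_insert, mem_singleton]
      tauto

lemma cnt3_swap (v : V) (P : V → V → V → Prop) :
    cnt3 v P = cnt3 v fun a b c => P b a c := by
  unfold cnt3
  congr 1
  refine filter_congr fun s _ => ⟨?_, ?_⟩ <;>
    rintro ⟨hv, a, ha, b, hb, c, hc, rfl, hP⟩ <;>
    exact ⟨hv, b, hb, a, ha, c, hc, insert_comm a b {c}, hP⟩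

lemma twoPathEnd_eq_card (a : V) : twoPathEnd G a =
    #{p : V × V | [a, p.1, p.2].Nodup ∧ G.Adj a p.1 ∧ G.Adj p.1 p.2 ∧ ¬G.Adj a p.2} := by
  symm
  refine card_bij (fun p _ => {p.1, p.2}) ?_ ?_ ?_
  · rintro ⟨x, y⟩ hp
    simp only [mem_filter, mem_univ, true_and, List.nodup_cons, List.mem_cons,
      List.not_mem_nil, or_false, not_or, List.nodup_nil, not_false_eq_true, and_true] at hp
    obtain ⟨⟨⟨hax, hay⟩, hxy⟩, hx, hxy', hy⟩ := hp
    simp only [mem_filter, mem_powersetCard, subset_univ, true_and, card_pair hxy]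
    exact ⟨by simp [hax, hay], x, by simp, y, by simp, rfl, hx, hxy', hy⟩
  · rintro ⟨x, y⟩ hp ⟨x', y'⟩ hp' hs
    have hx' : x' ∈ ({x, y} : Finset V) := hs ▸ by simp
    have hy' : y' ∈ ({x, y} : Finset V) := hs ▸ by simp
    simp only [mem_filter, mem_univ, true_and, mem_insert, mem_singleton] at hp hp' hx' hy'
    grind [SimpleGraph.adj_comm]
  · intro s hs
    simp only [mem_filter, mem_powersetCard] at hs
    obtain ⟨-, ha, x, -, y, hy, rfl, hx, hxy, hay⟩ := hs
    refine ⟨(x, y), ?_, rfl⟩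
    simp only [mem_filter, mem_univ, true_and, List.nodup_cons, List.mem_cons,
      List.not_mem_nil, or_false, not_or, List.nodup_nil, not_false_eq_true, and_true]
    exact ⟨⟨⟨hx.ne, fun h => ha (h ▸ hy)⟩, hxy.ne⟩, hx, hxy, hay⟩

lemma twoPathEnd_eq_n2c_add {v a : V} (hva : G.Adj v a) : twoPathEnd G a = n2c G v a +
    #{p : V × V | [v, a, p.1, p.2].Nodup ∧ G.Adj a p.1 ∧ G.Adj p.1 p.2 ∧ ¬G.Adj a p.2} := by
  rw [twoPathEnd_eq_card, ← card_filter_add_card_filter_not (p := fun p : V × V => p.1 = v),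
    filter_filter, filter_filter]
  congr 1
  · refine card_nbij' (fun p => p.2) (fun x => (v, x)) ?_ ?_ ?_ ?_ <;> intro p hp <;>
      simp only [coe_filter, Set.mem_ofPred_eq, mem_univ, true_and] at hp ⊢ <;>
      grind [SimpleGraph.adj_comm]
  · congr 1
    ext p
    simp only [mem_filter, mem_univ, true_and]
    grind [SimpleGraph.adj_comm, SimpleGraph.irrefl]

noncomputable def tailPaths (v : V) : Finset (V × V × V) :=
  {t | [v, t.1, t.2.1, t.2.2].Nodup ∧ G.Adj v t.1 ∧ G.Adj t.1 t.2.1 ∧ G.Adj t.2.1 t.2.2 ∧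
    ¬G.Adj t.1 t.2.2}

lemma sum_twoPathEnd_sub_n2c [DecidableRel G.Adj] (v : V) :
    ∑ a ∈ G.neighborFinset v, ((twoPathEnd G a : ℤ) - n2c G v a) = #(tailPaths G v) := by
  have hsplit : ∀ a ∈ G.neighborFinset v, ((twoPathEnd G a : ℤ) - n2c G v a) =
      #{p : V × V | [v, a, p.1, p.2].Nodup ∧ G.Adj a p.1 ∧ G.Adj p.1 p.2 ∧
        ¬G.Adj a p.2} := by
    intro a ha
    rw [twoPathEnd_eq_n2c_add G ((G.mem_neighborFinset v a).mp ha), Nat.cast_add,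
      add_sub_cancel_left]
    congr!
  rw [sum_congr rfl hsplit, ← Nat.cast_sum, sum_card_filter_eq_card_filter_prod, tailPaths]
  congr 2
  ext t
  simp only [mem_filter, mem_univ, true_and, SimpleGraph.mem_neighborFinset]
  tauto

lemma F4_eq_card (v : V) : F4 G v = #{t : V × V × V | [v, t.1, t.2.1, t.2.2].Nodup ∧
    G.Adj v t.1 ∧ G.Adj t.1 t.2.1 ∧ G.Adj t.2.1 t.2.2 ∧ ¬G.Adj v t.2.1 ∧
    ¬G.Adj v t.2.2 ∧ ¬G.Adj t.1 t.2.2} := by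
  rw [F4]
  refine (card_nodup_filter_eq_cnt3 v _ ?_).symm
  intros
  grind [SimpleGraph.adj_comm]

lemma two_mul_F7_eq_card (v : V) : 2 * F7 G v = #{t : V × V × V |
    [v, t.1, t.2.1, t.2.2].Nodup ∧ G.Adj v t.1 ∧ G.Adj t.1 t.2.1 ∧ G.Adj t.2.1 t.2.2 ∧
    G.Adj v t.2.2 ∧ ¬G.Adj v t.2.1 ∧ ¬G.Adj t.1 t.2.2} := by
  rw [F7]
  refine (card_nodup_filter_eq_two_mul_cnt3 v _ ?_ ?_).symm <;>
    intros <;> grind [SimpleGraph.adj_comm]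

lemma F8''_eq_card (v : V) : F8'' G v = #{t : V × V × V | [v, t.1, t.2.1, t.2.2].Nodup ∧
    G.Adj v t.2.1 ∧ G.Adj v t.1 ∧ G.Adj t.2.1 t.1 ∧ G.Adj t.2.1 t.2.2 ∧ ¬G.Adj v t.2.2 ∧
    ¬G.Adj t.1 t.2.2} := by
  rw [F8'', cnt3_swap]
  refine (card_nodup_filter_eq_cnt3 v _ ?_).symm
  intros
  grind [SimpleGraph.adj_comm]

lemma two_mul_F9'_eq_card (v : V) : 2 * F9' G v = #{t : V × V × V |
    [v, t.1, t.2.1, t.2.2].Nodup ∧ G.Adj v t.2.1 ∧ G.Adj v t.1 ∧ G.Adj v t.2.2 ∧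
    G.Adj t.2.1 t.1 ∧ G.Adj t.2.1 t.2.2 ∧ ¬G.Adj t.1 t.2.2} := by
  rw [F9', cnt3_swap]
  refine (card_nodup_filter_eq_two_mul_cnt3 v _ ?_ ?_).symm <;>
    intros <;> grind [SimpleGraph.adj_comm]

lemma card_tailPaths (v : V) :
    #(tailPaths G v) = F4 G v + 2 * F7 G v + F8'' G v + 2 * F9' G v := by
  rw [card_eq_sum_card_filter_of_two_cases (tailPaths G v) (fun t => G.Adj v t.2.1)
    (fun t => G.Adj v t.2.2), F4_eq_card, two_mul_F7_eq_card, F8''_eq_card, two_mul_F9'_eq_card,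
    tailPaths]
  refine congrArg₂ (· + ·) (congrArg₂ (· + ·) (congrArg₂ (· + ·) ?_ ?_) ?_) ?_ <;>
    congr 1 <;> ext t <;> simp only [mem_filter, mem_univ, true_and] <;>
    grind [SimpleGraph.adj_comm]

theorem statement15 [DecidableRel G.Adj] (v : V) :
    ∑ a ∈ G.neighborFinset v, ((twoPathEnd G a : ℤ) - (n2c G v a : ℤ)) =
      (F4 G v : ℤ) + 2 * (F7 G v : ℤ) + (F8'' G v : ℤ) + 2 * (F9' G v : ℤ) := by
  rw [sum_twoPathEnd_sub_n2c, card_tailPaths]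
  push_cast
  ring

end FourProfiles
end

section
/- Let G be a finite simple graph with vertex set V. For every vertex v: the sum over all neighbors a of v of the number of 2-element subsets {b,c} ⊆ Γ(a) with b adjacent to c, b ∉ Γ(v), and c ∉ Γ(v), equals F8(v). -/
open Finset
open scoped Classical

namespace FourProfiles

variable {V : Type*} [Fintype V] [DecidableEq V]

variable (G : SimpleGraph V)

/-! A paw with pendant vertex `v` is `{a} ∪ {b, c}` where `a` is the only neighbour of `v` in it
and `{b, c}` is an edge of `Γ(a)` avoiding `Γ(v)`. Hence `(a, {b, c}) ↦ {a, b, c}` is a bijection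
from the pairs counted on the left onto the paws counted by `F8`: it is injective because `a` is
recovered as the unique neighbour of `v` in the image. -/

theorem injOn_sigma_insert {α : Type*} [DecidableEq α] {A : Finset α}
    {S : α → Finset (Finset α)} (hS : ∀ a ∈ A, ∀ s ∈ S a, Disjoint A s) :
    Set.InjOn (fun p : (_ : α) × Finset α => insert p.1 p.2) (A.sigma S) := by
  rintro ⟨a, s⟩ hp ⟨a', s'⟩ hp' h
  simp only [coe_sigma, Set.mem_sigma_iff, mem_coe] at hp hp' h
  have ha : a = a' := by
    have : a ∈ insert a' s' := h ▸ mem_insert_self a s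
    exact (mem_insert.1 this).resolve_right (disjoint_left.1 (hS a' hp'.1 s' hp'.2) hp.1)
  subst ha
  have hs : s = s' := by
    rw [← erase_insert (disjoint_left.1 (hS a hp.1 s hp.2) hp.1),
      ← erase_insert (disjoint_left.1 (hS a hp'.1 s' hp'.2) hp'.1), h]
  rw [hs]

section Paw

variable {W : Type*} [DecidableEq W] {H : SimpleGraph W} {v a b c : W}

theorem card_paw_eq_three (hva : H.Adj v a) (hbc : H.Adj b c) (hvb : ¬H.Adj v b)
    (hvc : ¬H.Adj v c) : #({a, b, c} : Finset W) = 3 :=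
  card_eq_three.2 ⟨a, b, c, fun h => hvb (h ▸ hva), fun h => hvc (h ▸ hva), H.ne_of_adj hbc, rfl⟩

theorem notMem_paw (hva : H.Adj v a) (hbc : H.Adj b c) (hvb : ¬H.Adj v b) (hvc : ¬H.Adj v c) :
    v ∉ ({a, b, c} : Finset W) := by
  simp only [mem_insert, mem_singleton, not_or]
  refine ⟨H.ne_of_adj hva, ?_, ?_⟩
  · rintro rfl
    exact hvc hbc
  · rintro rfl
    exact hvb hbc.symm

end Paw

theorem statement17 [DecidableRel G.Adj] (v : V) :
    ∑ a ∈ G.neighborFinset v, triOut G v a = F8 G v := by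
  simp only [triOut, F8, cnt3]
  rw [← card_sigma]
  refine card_bij (fun p _ => insert p.1 p.2) ?_ ?_ ?_
  · rintro ⟨a, s⟩ hp
    simp only [mem_sigma, SimpleGraph.mem_neighborFinset, mem_filter,
      mem_powersetCard_univ] at hp ⊢
    obtain ⟨hva, -, b, -, c, -, rfl, hab, hac, hbc, hvb, hvc⟩ := hp
    exact ⟨card_paw_eq_three hva hbc hvb hvc, notMem_paw hva hbc hvb hvc,
      a, by simp, b, by simp, c, by simp, rfl, hva, hab, hac, hbc, hvb, hvc⟩
  · refine fun p hp q hq => injOn_sigma_insert (fun a _ s hs => ?_) hp hq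
    simp only [mem_filter] at hs
    obtain ⟨-, b, -, c, -, rfl, -, -, -, hvb, hvc⟩ := hs
    simp only [disjoint_left, SimpleGraph.mem_neighborFinset, mem_insert, mem_singleton, not_or]
    exact fun x hvx => ⟨fun h => hvb (h ▸ hvx), fun h => hvc (h ▸ hvx)⟩
  · intro t ht
    simp only [mem_filter, mem_powersetCard_univ] at ht
    obtain ⟨-, -, a, -, b, -, c, -, rfl, hva, hab, hac, hbc, hvb, hvc⟩ := ht
    refine ⟨⟨a, {b, c}⟩, ?_, rfl⟩
    simp only [mem_sigma, SimpleGraph.mem_neighborFinset, mem_filter, mem_powersetCard_univ]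
    exact ⟨hva, card_pair (G.ne_of_adj hbc), b, by simp, c, by simp, rfl,
      hab, hac, hbc, hvb, hvc⟩

end FourProfiles
end
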